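/- Assume f = max A = b−1 and let s be a complex number with Re s > log N / log b. With F_s(m) = m^s Σ_{l=−∞}^{∞} γ_B(−b^{−l} m) e^{−m b^{−l}} b^{−ls}, the difference between m^s e^{−m} E(m) and F_s(m) is exponentially small: there exist constants C < ∞ and c > 0 such that |m^s e^{−m} E(m) − F_s(m)| ≤ C e^{−cm} for all real m ≥ 1. -/

import Mathlib

/-!
Write `B = {b - 1 - a : a ∈ A}`. Factoring digit by digit,
`∑_{a ∈ A^l} e^{m(a₁/b + ⋯ + a_l/b^l)} = e^{m - m/b^l} ∏_{j<l} α_B(-m/b^{j+1})`,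
and the same product appears in `γ_B(-m/b^l) = ∏_{j<l} α_B(-m/b^{j+1}) · γ_B(-m)`.
So the terms `l ≥ 0` of `F_s(m)` are exactly `γ_B(-m)` times those of `m^s e^{-m} E(m)`, and the
difference is `m^s ((1 - γ_B(-m)) e^{-m} E(m) - ∑_{l<0})`. Since `0 ∈ B`, `γ_B(-m) - 1 = O(e^{-m})`;
`e^{-m} E(m)` is dominated by the geometric series `∑ (N b^{-Re s})^l`; and the terms `l < 0` are
`O(e^{-m})` with doubly exponential decay in `l`. What remains is `m^{Re s} e^{-m} = O(e^{-m/2})`.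
-/

open Finset

noncomputable section

/-- The rational point a₁/b + ⋯ + a_l/b^l attached to a digit tuple. -/
def digitVal (b l : ℕ) (a : Fin l → ℕ) : ℝ :=
  ∑ i : Fin l, (a i : ℝ) / (b : ℝ) ^ ((i : ℕ) + 1)

/-- The finset of digit tuples of length l with entries in A. -/
def tuples (A : Finset ℕ) (l : ℕ) : Finset (Fin l → ℕ) :=
  Fintype.piFinset fun _ => A

/-- E(t) = 1 + Σ_{l≥1} Σ_{(a₁,…,a_l)∈A^l} e^{t(a₁/b+⋯+a_l/b^l)} b^{−ls}. -/
def egf (b : ℕ) (A : Finset ℕ) (s : ℂ) (t : ℝ) : ℂ :=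
  ∑' l : ℕ, ∑ a ∈ tuples A l, ((Real.exp (t * digitVal b l a) : ℝ) : ℂ) * (b : ℂ) ^ (-(l : ℂ) * s)

/-- α_B(t) = Σ_{d∈B} e^{dt}. -/
def alphaB (B : Finset ℕ) (t : ℝ) : ℝ := ∑ d ∈ B, Real.exp (d * t)

/-- γ_B(−t) = Π_{i≥0} α_B(−b^i t), as a function of t. -/
def gammaNeg (b : ℕ) (B : Finset ℕ) (t : ℝ) : ℝ := ∏' i : ℕ, alphaB B (-((b : ℝ) ^ i * t))

/-- F_s(m) = m^s Σ_{l∈ℤ} γ_B(−b^{−l}m) e^{−mb^{−l}} b^{−ls}. -/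
def Fs (b : ℕ) (B : Finset ℕ) (s : ℂ) (m : ℝ) : ℂ :=
  (m : ℂ) ^ s * ∑' l : ℤ,
    ((gammaNeg b B ((b : ℝ) ^ (-l) * m) : ℝ) : ℂ) *
      ((Real.exp (-(m * (b : ℝ) ^ (-l))) : ℝ) : ℂ) * (b : ℂ) ^ (-(l : ℂ) * s)

open Real

section GammaNeg

variable {b : ℕ} {B : Finset ℕ}

lemma alphaB_pos (hB : B.Nonempty) (v : ℝ) : 0 < alphaB B v :=
  sum_pos (fun _ _ => exp_pos _) hB

lemma one_le_alphaB (hB0 : 0 ∈ B) (v : ℝ) : 1 ≤ alphaB B v := by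
  simpa [alphaB] using single_le_sum (f := fun d : ℕ => exp (d * v))
    (fun _ _ => (exp_pos _).le) hB0

lemma alphaB_neg_le_card {v : ℝ} (hv : 0 ≤ v) : alphaB B (-v) ≤ B.card := by
  calc alphaB B (-v) ≤ ∑ _d ∈ B, (1 : ℝ) :=
        sum_le_sum fun d _ => exp_le_one_iff.2 (by nlinarith [d.cast_nonneg (α := ℝ)])
    _ = B.card := by simp

lemma log_alphaB_neg_le (hB0 : 0 ∈ B) {v : ℝ} (hv : 0 ≤ v) :
    log (alphaB B (-v)) ≤ B.card * exp (-v) := by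
  have herase : alphaB B (-v) - 1 ≤ B.card * exp (-v) := by
    rw [alphaB, ← add_sum_erase _ _ hB0]
    calc (exp ((0 : ℕ) * -v) + ∑ d ∈ B.erase 0, exp (d * -v)) - 1
        = ∑ d ∈ B.erase 0, exp (d * -v) := by simp
      _ ≤ ∑ _d ∈ B.erase 0, exp (-v) := by
        refine sum_le_sum fun d hd => exp_le_exp.2 ?_
        have : (1 : ℝ) ≤ d := by exact_mod_cast Nat.one_le_iff_ne_zero.2 (ne_of_mem_erase hd)
        nlinarith
      _ ≤ B.card * exp (-v) := by
        rw [sum_const, nsmul_eq_mul]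
        gcongr
        exact erase_subset _ _
  linarith [log_le_sub_one_of_pos (alphaB_pos ⟨0, hB0⟩ (-v))]

lemma log_alphaB_neg_pow_mul_le (hb : 2 ≤ b) (hB0 : 0 ∈ B) {t : ℝ} (ht : 0 ≤ t) (i : ℕ) :
    log (alphaB B (-(b ^ i * t))) ≤ B.card * exp (-t) * exp (-t) ^ i := by
  have hbi : (i : ℝ) + 1 ≤ (b : ℝ) ^ i := by
    exact_mod_cast Nat.lt_pow_self (by omega : 1 < b)
  calc log (alphaB B (-(b ^ i * t))) ≤ B.card * exp (-(b ^ i * t)) :=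
        log_alphaB_neg_le hB0 (by positivity)
    _ ≤ B.card * (exp (-t) * exp (-t) ^ i) := by
        rw [← exp_nat_mul, ← exp_add]
        gcongr
        nlinarith
    _ = B.card * exp (-t) * exp (-t) ^ i := by ring

lemma summable_log_alphaB (hb : 2 ≤ b) (hB0 : 0 ∈ B) {t : ℝ} (ht : 0 < t) :
    Summable fun i : ℕ => log (alphaB B (-(b ^ i * t))) :=
  .of_nonneg_of_le (fun _ => log_nonneg (one_le_alphaB hB0 _))
    (log_alphaB_neg_pow_mul_le hb hB0 ht.le)
    ((summable_geometric_of_lt_one (exp_pos _).le (exp_lt_one_iff.2 (by linarith))).mul_left _)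

lemma gammaNeg_eq_exp_tsum (hb : 2 ≤ b) (hB0 : 0 ∈ B) {t : ℝ} (ht : 0 < t) :
    gammaNeg b B t = exp (∑' i : ℕ, log (alphaB B (-(b ^ i * t)))) :=
  (rexp_tsum_eq_tprod (fun _ => alphaB_pos ⟨0, hB0⟩ _) (summable_log_alphaB hb hB0 ht)).symm

lemma one_le_gammaNeg (hb : 2 ≤ b) (hB0 : 0 ∈ B) {t : ℝ} (ht : 0 < t) :
    1 ≤ gammaNeg b B t := by
  rw [gammaNeg_eq_exp_tsum hb hB0 ht]
  exact one_le_exp (tsum_nonneg fun _ => log_nonneg (one_le_alphaB hB0 _))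

lemma gammaNeg_sub_one_le (hb : 2 ≤ b) (hB0 : 0 ∈ B) :
    ∃ K : ℝ, 0 ≤ K ∧ ∀ t : ℝ, 1 ≤ t → gammaNeg b B t - 1 ≤ K * exp (-t) := by
  set L : ℝ := B.card * (1 - exp (-1))⁻¹
  have he1 : 0 < 1 - exp (-1) := by linarith [exp_lt_one_iff.2 neg_one_lt_zero]
  have hL : 0 ≤ L := by positivity
  refine ⟨L * exp L, by positivity, fun t ht => ?_⟩
  have het : exp (-t) < 1 := exp_lt_one_iff.2 (by linarith)
  set y := ∑' i : ℕ, log (alphaB B (-(b ^ i * t)))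
  have hy0 : 0 ≤ y := tsum_nonneg fun _ => log_nonneg (one_le_alphaB hB0 _)
  have hyL : y ≤ L * exp (-t) := by
    calc y ≤ ∑' i : ℕ, B.card * exp (-t) * exp (-t) ^ i :=
          (summable_log_alphaB hb hB0 (by linarith)).tsum_le_tsum
            (log_alphaB_neg_pow_mul_le hb hB0 (by linarith))
            ((summable_geometric_of_lt_one (exp_pos _).le het).mul_left _)
      _ = B.card * exp (-t) * (1 - exp (-t))⁻¹ := by
          rw [tsum_mul_left, tsum_geometric_of_lt_one (exp_pos _).le het]
      _ ≤ L * exp (-t) := by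
          have : exp (-t) ≤ exp (-1) := exp_le_exp.2 (by linarith)
          show _ ≤ B.card * (1 - exp (-1))⁻¹ * exp (-t)
          rw [mul_right_comm]
          gcongr
  have hexp : exp y - 1 ≤ y * exp y := by
    nlinarith [add_one_le_exp (-y), exp_pos y, exp_neg y, mul_inv_cancel₀ (exp_pos y).ne']
  rw [gammaNeg_eq_exp_tsum hb hB0 (by linarith)]
  calc exp y - 1 ≤ y * exp y := hexp
    _ ≤ L * exp (-t) * exp L := by
        gcongr
        nlinarith [exp_pos (-t)]
    _ = L * exp L * exp (-t) := by ring

lemma gammaNeg_eq_alphaB_mul (hb : 2 ≤ b) (hB0 : 0 ∈ B) {t : ℝ} (ht : 0 < t) :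
    gammaNeg b B t = alphaB B (-t) * gammaNeg b B (b * t) := by
  have hshift : (fun i : ℕ => alphaB B (-(b ^ (i + 1) * t)))
      = fun i : ℕ => alphaB B (-(b ^ i * (b * t))) := by
    funext i; rw [pow_succ, mul_assoc]
  have hmul : Multipliable fun i : ℕ => alphaB B (-(b ^ (i + 1) * t)) := by
    rw [hshift]
    exact multipliable_of_summable_log (fun _ => alphaB_pos ⟨0, hB0⟩ _)
      (summable_log_alphaB hb hB0 (by positivity))
  unfold gammaNeg
  rw [tprod_eq_zero_mul' (f := fun i : ℕ => alphaB B (-(b ^ i * t))) hmul, hshift, pow_zero,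
    one_mul]

lemma gammaNeg_div_pow (hb : 2 ≤ b) (hB0 : 0 ∈ B) {m : ℝ} (hm : 0 < m) (n : ℕ) :
    gammaNeg b B (m / b ^ n)
      = (∏ j ∈ range n, alphaB B (-(m / b ^ (j + 1)))) * gammaNeg b B m := by
  induction n with
  | zero => simp
  | succ n ih =>
    have hbm : (b : ℝ) * (m / b ^ (n + 1)) = m / b ^ n := by
      field_simp [show (b : ℝ) ≠ 0 by positivity]; ring
    rw [gammaNeg_eq_alphaB_mul hb hB0 (by positivity), hbm, ih, prod_range_succ]
    ring

end GammaNeg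

lemma rpow_mul_exp_neg_le (σ : ℝ) :
    ∃ D : ℝ, 0 ≤ D ∧ ∀ x : ℝ, 1 ≤ x → x ^ σ * exp (-x) ≤ D * exp (-(x / 2)) := by
  obtain ⟨k, hk⟩ := exists_nat_ge σ
  refine ⟨2 ^ k * k.factorial, by positivity, fun x hx => ?_⟩
  have hpow : x ^ σ ≤ 2 ^ k * (x / 2) ^ k := by
    rw [← mul_pow, mul_div_cancel₀ _ two_ne_zero, ← rpow_natCast]
    exact rpow_le_rpow_of_exponent_le hx hk
  have hfac : (x / 2) ^ k ≤ k.factorial * exp (x / 2) := by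
    have := pow_div_factorial_le_exp (x / 2) (by linarith) k
    rwa [div_le_iff₀ (by positivity), mul_comm] at this
  have hexp : exp (x / 2) * exp (-x) = exp (-(x / 2)) := by rw [← exp_add]; ring_nf
  calc x ^ σ * exp (-x) ≤ 2 ^ k * (k.factorial * exp (x / 2)) * exp (-x) := by
        gcongr
        exact hpow.trans (by gcongr)
    _ = 2 ^ k * k.factorial * exp (-(x / 2)) := by rw [← hexp]; ring

lemma card_mul_rpow_neg_lt_one {N b : ℕ} (hb : 1 < b) (hN : 0 < N) {σ : ℝ}
    (hσ : log N / log b < σ) : (N : ℝ) * (b : ℝ) ^ (-σ) < 1 := by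
  have hb0 : (0 : ℝ) < b := by positivity
  have hNb : (N : ℝ) < (b : ℝ) ^ σ := by
    rw [lt_rpow_iff_log_lt (by positivity) hb0]
    rwa [div_lt_iff₀ (log_pos (by exact_mod_cast hb))] at hσ
  rw [rpow_neg hb0.le, ← div_eq_mul_inv]
  exact (div_lt_one (by positivity)).2 hNb

lemma summable_and_norm_tsum_le_of_le_geometric {E : Type*} [NormedAddCommGroup E]
    [CompleteSpace E] {f : ℕ → E} {C r : ℝ} (hr0 : 0 ≤ r) (hr1 : r < 1)
    (hf : ∀ n, ‖f n‖ ≤ C * r ^ n) :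
    Summable f ∧ ‖∑' n, f n‖ ≤ C * (1 - r)⁻¹ := by
  have hg : HasSum (fun n => C * r ^ n) (C * (1 - r)⁻¹) :=
    (hasSum_geometric_of_lt_one hr0 hr1).mul_left C
  exact ⟨.of_norm_bounded hg.summable hf, tsum_of_norm_bounded hg hf⟩

section DigitSums

variable {b : ℕ} {A : Finset ℕ}

lemma sum_exp_mul_eq_exp_mul_alphaB (hAb : A ⊆ range b) (u : ℝ) :
    ∑ x ∈ A, exp (x * u) = exp ((b - 1) * u) * alphaB (A.image fun a => b - 1 - a) (-u) := by
  rw [alphaB, sum_image, mul_sum]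
  · refine sum_congr rfl fun x hx => ?_
    have hx : x < b := mem_range.1 (hAb hx)
    rw [← exp_add, Nat.cast_sub (by omega), Nat.cast_sub (by omega)]
    congr 1
    push_cast
    ring
  · intro x hx y hy hxy
    have := mem_range.1 (hAb hx)
    have := mem_range.1 (hAb hy)
    simp only at hxy
    omega

lemma sum_tuples_exp_digitVal (hb : 0 < b) (hAb : A ⊆ range b) (l : ℕ) (m : ℝ) :
    ∑ a ∈ tuples A l, exp (m * digitVal b l a)
      = exp (m - m / b ^ l) *
          ∏ j ∈ range l, alphaB (A.image fun a => b - 1 - a) (-(m / b ^ (j + 1))) := by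
  calc ∑ a ∈ tuples A l, exp (m * digitVal b l a)
      = ∑ a ∈ tuples A l, ∏ i : Fin l, exp (a i * (m / b ^ ((i : ℕ) + 1))) := by
        refine sum_congr rfl fun a _ => ?_
        rw [digitVal, mul_sum, ← exp_sum]
        congr 1
        exact sum_congr rfl fun i _ => by ring
    _ = ∏ i : Fin l, ∑ x ∈ A, exp (x * (m / b ^ ((i : ℕ) + 1))) :=
        sum_prod_piFinset A fun (i : Fin l) (x : ℕ) => exp (x * (m / b ^ ((i : ℕ) + 1)))
    _ = ∏ j ∈ range l, (exp (m / b ^ j - m / b ^ (j + 1)) *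
          alphaB (A.image fun a => b - 1 - a) (-(m / b ^ (j + 1)))) := by
        rw [Fin.prod_univ_eq_prod_range (fun j => ∑ x ∈ A, exp (x * (m / b ^ (j + 1))))]
        refine prod_congr rfl fun j _ => ?_
        rw [sum_exp_mul_eq_exp_mul_alphaB hAb]
        congr 2
        field_simp
        ring
    _ = _ := by
        rw [prod_mul_distrib, ← exp_sum, sum_range_sub' (fun j => m / (b : ℝ) ^ j)]
        simp

end DigitSums

def egfTerm (b : ℕ) (A : Finset ℕ) (s : ℂ) (t : ℝ) (l : ℕ) : ℂ :=
  ∑ a ∈ tuples A l, ((exp (t * digitVal b l a) : ℝ) : ℂ) * (b : ℂ) ^ (-(l : ℂ) * s)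

def FsTerm (b : ℕ) (B : Finset ℕ) (s : ℂ) (m : ℝ) (l : ℤ) : ℂ :=
  ((gammaNeg b B ((b : ℝ) ^ (-l) * m) : ℝ) : ℂ) *
    ((exp (-(m * (b : ℝ) ^ (-l))) : ℝ) : ℂ) * (b : ℂ) ^ (-(l : ℂ) * s)

lemma egf_eq_tsum_egfTerm (b : ℕ) (A : Finset ℕ) (s : ℂ) (t : ℝ) :
    egf b A s t = ∑' l, egfTerm b A s t l := rfl

lemma Fs_eq_mul_tsum_FsTerm (b : ℕ) (B : Finset ℕ) (s : ℂ) (m : ℝ) :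
    Fs b B s m = (m : ℂ) ^ s * ∑' l, FsTerm b B s m l := rfl

section Series

variable {b : ℕ} {A B : Finset ℕ} {s : ℂ}

lemma norm_natCast_cpow_neg_natCast_mul (hb : 0 < b) (l : ℕ) :
    ‖(b : ℂ) ^ (-(l : ℂ) * s)‖ = ((b : ℝ) ^ (-s.re)) ^ l := by
  rw [Complex.norm_natCast_cpow_of_pos hb, ← rpow_natCast, ← rpow_mul (by positivity)]
  simp [mul_comm]

lemma norm_natCast_cpow_neg_negSucc_mul (hb : 0 < b) (k : ℕ) :
    ‖(b : ℂ) ^ (-((-(k + 1) : ℤ) : ℂ) * s)‖ = ((b : ℝ) ^ (k + 1)) ^ s.re := by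
  rw [Complex.norm_natCast_cpow_of_pos hb, ← rpow_natCast, ← rpow_mul (by positivity)]
  simp

lemma exp_neg_mul_egfTerm (hb : 0 < b) (hAb : A ⊆ range b) (m : ℝ) (l : ℕ) :
    (exp (-m) : ℂ) * egfTerm b A s m l
      = ((exp (-(m / b ^ l)) *
            ∏ j ∈ range l, alphaB (A.image fun a => b - 1 - a) (-(m / b ^ (j + 1))) : ℝ) : ℂ)
          * (b : ℂ) ^ (-(l : ℂ) * s) := by
  rw [egfTerm, ← sum_mul, ← Complex.ofReal_sum, sum_tuples_exp_digitVal hb hAb, ← mul_assoc,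
    ← Complex.ofReal_mul, ← mul_assoc, ← exp_add]
  ring_nf

lemma norm_exp_neg_mul_egfTerm_le (hb : 0 < b) (hAb : A ⊆ range b) {m : ℝ} (hm : 0 ≤ m)
    (l : ℕ) :
    ‖(exp (-m) : ℂ) * egfTerm b A s m l‖ ≤ ((A.card : ℝ) * (b : ℝ) ^ (-s.re)) ^ l := by
  have hB : ((A.image fun a => b - 1 - a).card : ℝ) ≤ A.card := by exact_mod_cast card_image_le
  have hα0 : ∀ v, 0 ≤ alphaB (A.image fun a => b - 1 - a) v :=
    fun _ => sum_nonneg fun _ _ => (exp_pos _).le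
  have hprod : ∏ j ∈ range l, alphaB (A.image fun a => b - 1 - a) (-(m / b ^ (j + 1)))
      ≤ (A.card : ℝ) ^ l := by
    simpa using prod_le_prod (s := range l) (fun _ _ => hα0 _)
      fun j _ => (alphaB_neg_le_card (by positivity : 0 ≤ m / (b : ℝ) ^ (j + 1))).trans hB
  rw [exp_neg_mul_egfTerm hb hAb, norm_mul, Complex.norm_real, norm_natCast_cpow_neg_natCast_mul hb,
    Real.norm_of_nonneg (mul_nonneg (exp_pos _).le (prod_nonneg fun _ _ => hα0 _)), mul_pow]
  gcongr
  calc exp (-(m / b ^ l)) * _ ≤ 1 * (A.card : ℝ) ^ l := by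
        gcongr
        · exact prod_nonneg fun _ _ => hα0 _
        · exact exp_le_one_iff.2 (by simp only [neg_nonpos]; positivity)
    _ = _ := one_mul _


lemma FsTerm_natCast (hb : 2 ≤ b) (hAb : A ⊆ range b) (hbA : b - 1 ∈ A) {m : ℝ} (hm : 0 < m)
    (n : ℕ) :
    FsTerm b (A.image fun a => b - 1 - a) s m n
      = gammaNeg b (A.image fun a => b - 1 - a) m * ((exp (-m) : ℂ) * egfTerm b A s m n) := by
  have hB0 : 0 ∈ A.image fun a => b - 1 - a := mem_image.2 ⟨b - 1, hbA, Nat.sub_self _⟩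
  have hzpow : (b : ℝ) ^ (-(n : ℤ)) = ((b : ℝ) ^ n)⁻¹ := by rw [zpow_neg, zpow_natCast]
  rw [exp_neg_mul_egfTerm (by omega) hAb, FsTerm, hzpow, inv_mul_eq_div, ← div_eq_mul_inv,
    gammaNeg_div_pow hb hB0 hm]
  push_cast
  ring

lemma norm_FsTerm_neg_succ_le (hb : 2 ≤ b) (hB0 : 0 ∈ B) (s : ℂ) :
    ∃ C : ℝ, 0 ≤ C ∧ ∀ m : ℝ, 1 ≤ m → ∀ k : ℕ,
      ‖FsTerm b B s m (-(k + 1))‖ ≤ C * exp (-m) * exp (-(1 / 2)) ^ k := by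
  obtain ⟨K, hK0, hK⟩ := gammaNeg_sub_one_le hb hB0
  obtain ⟨D, hD0, hD⟩ := rpow_mul_exp_neg_le s.re
  refine ⟨(1 + K) * exp 1 * D, by positivity, fun m hm k => ?_⟩
  set y : ℝ := (b : ℝ) ^ (k + 1)
  have hky : (k : ℝ) + 1 ≤ y := by
    simp only [y]
    exact_mod_cast (Nat.lt_pow_self (by omega : 1 < b)).le
  have hy1 : 1 ≤ y := by linarith [k.cast_nonneg (α := ℝ)]
  have hzpow : (b : ℝ) ^ (-(-(k + 1) : ℤ)) = y := by
    simp only [y, neg_neg]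
    exact_mod_cast zpow_natCast (b : ℝ) (k + 1)
  have hγ1 : 1 ≤ gammaNeg b B (y * m) := one_le_gammaNeg hb hB0 (by positivity)
  have hγ : gammaNeg b B (y * m) ≤ 1 + K := by
    have := hK (y * m) (by nlinarith)
    nlinarith [exp_le_one_iff.2 (by nlinarith : -(y * m) ≤ 0)]
  have hexp : exp (-(m * y)) ≤ exp (-m) * exp (1 - y) := by
    rw [← exp_add]
    gcongr
    nlinarith
  have hdecay : y ^ s.re * exp (1 - y) ≤ exp 1 * D * exp (-(1 / 2)) ^ k := by
    rw [sub_eq_add_neg, exp_add, ← exp_nat_mul]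
    calc y ^ s.re * (exp 1 * exp (-y)) = exp 1 * (y ^ s.re * exp (-y)) := by ring
      _ ≤ exp 1 * (D * exp (-(y / 2))) := 
          mul_le_mul_of_nonneg_left (hD y hy1) (exp_pos _).le
      _ ≤ exp 1 * D * exp (k * -(1 / 2)) := by rw [← mul_assoc]; gcongr; linarith
  rw [FsTerm, hzpow, norm_mul, norm_mul, Complex.norm_real, Complex.norm_real,
    norm_natCast_cpow_neg_negSucc_mul (by omega), Real.norm_of_nonneg (by linarith),
    Real.norm_of_nonneg (exp_pos _).le]
  calc gammaNeg b B (y * m) * exp (-(m * y)) * y ^ s.re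
      ≤ (1 + K) * (exp (-m) * exp (1 - y)) * y ^ s.re := by gcongr
    _ = (1 + K) * exp (-m) * (y ^ s.re * exp (1 - y)) := by ring
    _ ≤ (1 + K) * exp (-m) * (exp 1 * D * exp (-(1 / 2)) ^ k) := by gcongr
    _ = (1 + K) * exp 1 * D * exp (-m) * exp (-(1 / 2)) ^ k := by ring

lemma Fs_eq_gammaNeg_mul_add (hb : 2 ≤ b) (hAb : A ⊆ range b) (hbA : b - 1 ∈ A) {m : ℝ}
    (hm : 0 < m) (hpos : Summable fun l => (exp (-m) : ℂ) * egfTerm b A s m l)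
    (hneg : Summable fun k : ℕ => FsTerm b (A.image fun a => b - 1 - a) s m (-(k + 1))) :
    Fs b (A.image fun a => b - 1 - a) s m
      = (m : ℂ) ^ s *
          (gammaNeg b (A.image fun a => b - 1 - a) m * ((exp (-m) : ℂ) * egf b A s m)
          + ∑' k : ℕ, FsTerm b (A.image fun a => b - 1 - a) s m (-(k + 1))) := by
  have hnat := funext (FsTerm_natCast (s := s) hb hAb hbA hm)
  rw [Fs_eq_mul_tsum_FsTerm, tsum_of_nat_of_neg_add_one (hnat ▸ hpos.mul_left _) hneg, hnat,
    tsum_mul_left, egf_eq_tsum_egfTerm, tsum_mul_left]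


lemma summable_exp_neg_mul_egfTerm_and_norm_le (hb : 0 < b) (hAb : A ⊆ range b)
    (hq : (A.card : ℝ) * (b : ℝ) ^ (-s.re) < 1) {m : ℝ} (hm : 0 ≤ m) :
    (Summable fun l => (exp (-m) : ℂ) * egfTerm b A s m l) ∧
      ‖(exp (-m) : ℂ) * egf b A s m‖ ≤ (1 - A.card * (b : ℝ) ^ (-s.re))⁻¹ := by
  have h := summable_and_norm_tsum_le_of_le_geometric (C := 1) (by positivity) hq
    fun l => (norm_exp_neg_mul_egfTerm_le hb hAb hm l).trans_eq (one_mul _).symm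
  rwa [tsum_mul_left, ← egf_eq_tsum_egfTerm, one_mul] at h

lemma summable_FsTerm_neg_succ_and_norm_le (hb : 2 ≤ b) (hB0 : 0 ∈ B) (s : ℂ) :
    ∃ C : ℝ, 0 ≤ C ∧ ∀ m : ℝ, 1 ≤ m →
      (Summable fun k : ℕ => FsTerm b B s m (-(k + 1))) ∧
        ‖∑' k : ℕ, FsTerm b B s m (-(k + 1))‖ ≤ C * exp (-m) := by
  obtain ⟨C, hC0, hC⟩ := norm_FsTerm_neg_succ_le hb hB0 s
  have hr1 : exp (-(1 / 2)) < 1 := exp_lt_one_iff.2 (by norm_num)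
  have hr0 : 0 < 1 - exp (-(1 / 2)) := by linarith
  refine ⟨C * (1 - exp (-(1 / 2)))⁻¹, by positivity, fun m hm => ?_⟩
  have h := summable_and_norm_tsum_le_of_le_geometric (exp_pos _).le hr1 (hC m hm)
  rwa [mul_right_comm] at h

lemma norm_sub_Fs_le (hb : 2 ≤ b) (hAb : A ⊆ range b) (hbA : b - 1 ∈ A)
    (hs : log A.card / log b < s.re) :
    ∃ C : ℝ, 0 ≤ C ∧ ∀ m : ℝ, 1 ≤ m →
      ‖(m : ℂ) ^ s * (exp (-m) : ℂ) * egf b A s m - Fs b (A.image fun a => b - 1 - a) s m‖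
        ≤ C * (m ^ s.re * exp (-m)) := by
  set B := A.image fun a => b - 1 - a
  have hB0 : 0 ∈ B := mem_image.2 ⟨b - 1, hbA, Nat.sub_self _⟩
  set q := (A.card : ℝ) * (b : ℝ) ^ (-s.re)
  have hq1 : q < 1 := card_mul_rpow_neg_lt_one (by omega) (card_pos.2 ⟨_, hbA⟩) hs
  obtain ⟨K, hK0, hK⟩ := gammaNeg_sub_one_le hb hB0
  obtain ⟨C, hC0, hC⟩ := summable_FsTerm_neg_succ_and_norm_le hb hB0 s
  have hq0 : 0 < 1 - q := by linarith
  refine ⟨K * (1 - q)⁻¹ + C, by positivity, fun m hm => ?_⟩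
  obtain ⟨hpos, hS⟩ := summable_exp_neg_mul_egfTerm_and_norm_le (by omega) hAb hq1 (by linarith)
  obtain ⟨hneg, hT⟩ := hC m hm
  have hγ : ‖(1 : ℂ) - gammaNeg b B m‖ ≤ K * exp (-m) := by
    rw [← Complex.ofReal_one, ← Complex.ofReal_sub, Complex.norm_real, norm_sub_rev,
      Real.norm_of_nonneg (by linarith [one_le_gammaNeg hb hB0 (by linarith : 0 < m)])]
    exact hK m hm
  rw [mul_assoc, Fs_eq_gammaNeg_mul_add hb hAb hbA (by linarith) hpos hneg, ← mul_sub, norm_mul,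
    Complex.norm_cpow_eq_rpow_re_of_pos (by linarith)]
  set S := (exp (-m) : ℂ) * egf b A s m
  set T := ∑' k : ℕ, FsTerm b B s m (-(k + 1))
  calc m ^ s.re * ‖S - (gammaNeg b B m * S + T)‖
      ≤ m ^ s.re * (‖(1 : ℂ) - gammaNeg b B m‖ * ‖S‖ + ‖T‖) := by
        gcongr
        rw [← norm_mul, show S - (gammaNeg b B m * S + T) = (1 - gammaNeg b B m) * S - T by ring]
        exact norm_sub_le _ _
    _ ≤ m ^ s.re * (K * exp (-m) * (1 - q)⁻¹ + C * exp (-m)) := by gcongr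
    _ = (K * (1 - q)⁻¹ + C) * (m ^ s.re * exp (-m)) := by ring

end Series

theorem egf_exponentially_close_to_Fs_general
    (b : ℕ) (hb : 2 ≤ b) (A : Finset ℕ) (hAb : A ⊆ Finset.range b)
    (hbA : b - 1 ∈ A)
    (s : ℂ) (hs : Real.log A.card / Real.log b < s.re) :
    ∃ C c : ℝ, 0 < c ∧ ∀ m : ℝ, 1 ≤ m →
      ‖(m : ℂ) ^ s * ((Real.exp (-m) : ℝ) : ℂ) * egf b A s m
          - Fs b (A.image fun a => b - 1 - a) s m‖
        ≤ C * Real.exp (-(c * m)) := by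
  obtain ⟨C, hC0, hC⟩ := norm_sub_Fs_le hb hAb hbA hs
  obtain ⟨D, -, hD⟩ := rpow_mul_exp_neg_le s.re
  refine ⟨C * D, 1 / 2, by norm_num, fun m hm => ?_⟩
  calc _ ≤ C * (m ^ s.re * exp (-m)) := hC m hm
    _ ≤ C * (D * exp (-(m / 2))) := mul_le_mul_of_nonneg_left (hD m hm) hC0
    _ = C * D * exp (-(1 / 2 * m)) := by ring_nf

/-- Assume max A = b−1, Re s > log N / log b.  Then m^s e^{−m} E(m)
differs from F_s(m) by an exponentially small quantity: there exist C < ∞ and c > 0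
with |m^s e^{−m} E(m) − F_s(m)| ≤ C e^{−cm} for all m ≥ 1. -/
theorem egf_exponentially_close_to_Fs
    (b : ℕ) (hb : 2 ≤ b) (A : Finset ℕ) (hA : A.Nonempty) (hAb : A ⊆ Finset.range b)
    (hbA : b - 1 ∈ A)
    (s : ℂ) (hs : Real.log A.card / Real.log b < s.re) :
    ∃ C c : ℝ, 0 < c ∧ ∀ m : ℝ, 1 ≤ m →
      ‖(m : ℂ) ^ s * ((Real.exp (-m) : ℝ) : ℂ) * egf b A s m
          - Fs b (A.image fun a => b - 1 - a) s m‖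
        ≤ C * Real.exp (-(c * m)) :=
  egf_exponentially_close_to_Fs_general b hb A hAb hbA s hs
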